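/- arXiv:math/0205057 — 8 statements merged into one kernel-verified Lean document; each statement's English description precedes it below -/
import Mathlib

section
/- Let a, d, t be integers with t ≥ 1 and a + t − 1 ≤ d, and let r be the relation on ℤ given by r x y ↔ x ∈ Icc a (d − t) ∧ y = x + t (a periodic pairing of period t on the periodic interval Icc a d). Then for all x, y ∈ Icc a d, EqvGen r x y holds if and only if t divides x − y; consequently the orbit equivalence has exactly t orbits on Icc a d, each containing a unique point of Icc a (a + t − 1). -/
/-!
Each pairing step translates by `t`, so orbits lie inside residue classes mod `t`. Conversely,
stepping down by `t` from any `x ∈ Icc a d` stays inside the interval until it reaches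
`a + (x - a) % t`, the unique point of the residue class of `x` in the first period
`Icc a (a + t - 1)`. Since `a + t - 1 ≤ d`, that period is a transversal of the orbits,
so there are exactly `t` of them.
-/

open Relation

theorem Nat.card_quot_eq_of_transversal {α β : Type*} {R : α → α → Prop}
    (hR : Equivalence R) (i : β → α) (hsurj : ∀ x, ∃ b, R x (i b))
    (hinj : ∀ b b', R (i b) (i b') → b = b') :
    Nat.card (Quot R) = Nat.card β :=
  (Nat.card_eq_of_bijective (fun b => Quot.mk R (i b))
    ⟨fun b b' h => hinj b b' (hR.eqvGen_iff.mp (Quot.eqvGen_exact h)),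
      Quot.ind fun x => (hsurj x).imp fun _ hb => Quot.sound (hR.symm hb)⟩).symm

theorem Int.add_emod_sub_mem_Icc {t : ℤ} (ht : 0 < t) (a x : ℤ) :
    a + (x - a) % t ∈ Set.Icc a (a + t - 1) := by
  have := Int.emod_nonneg (x - a) ht.ne'
  have := Int.emod_lt_of_pos (x - a) ht
  constructor <;> omega

theorem Int.eq_of_modEq_of_mem_Icc {a t x y : ℤ} (hx : x ∈ Set.Icc a (a + t - 1))
    (hy : y ∈ Set.Icc a (a + t - 1)) (h : x ≡ y [ZMOD t]) : x = y := by
  have := Int.eq_zero_of_abs_lt_dvd (Int.modEq_iff_dvd.mp h) (abs_lt.mpr ⟨by grind, by grind⟩)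
  omega

def periodicPairing (a d t x y : ℤ) : Prop :=
  x ∈ Set.Icc a (d - t) ∧ y = x + t

section

variable {a d t : ℤ}

theorem modEq_of_eqvGen_periodicPairing {x y : ℤ} (h : EqvGen (periodicPairing a d t) x y) :
    x ≡ y [ZMOD t] := by
  have hmodEq : Equivalence (Int.ModEq t) := ⟨Int.ModEq.refl, Int.ModEq.symm, Int.ModEq.trans⟩
  refine hmodEq.eqvGen_iff.mp (EqvGen.mono ?_ x y h)
  rintro x _ ⟨-, rfl⟩
  exact Int.add_modEq_right.symm

theorem eqvGen_periodicPairing_add_mul (ht : 0 ≤ t) {y : ℤ} (hy : a ≤ y) :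
    ∀ n : ℕ, y + n * t ≤ d → EqvGen (periodicPairing a d t) y (y + n * t)
  | 0, _ => by simpa using EqvGen.refl y
  | n + 1, h => by
    have : 0 ≤ (n : ℤ) * t := by positivity
    push_cast at h
    refine EqvGen.trans _ _ _ (eqvGen_periodicPairing_add_mul ht hy n (by linarith)) ?_
    exact EqvGen.rel _ _ ⟨⟨by linarith, by linarith⟩, by push_cast; ring⟩

theorem eqvGen_periodicPairing_emod (ht : 0 < t) {x : ℤ} (hx : x ∈ Set.Icc a d) :
    EqvGen (periodicPairing a d t) (a + (x - a) % t) x := by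
  have hq : 0 ≤ (x - a) / t := Int.ediv_nonneg (by linarith [hx.1]) ht.le
  have hx' : a + (x - a) % t + ((x - a) / t).toNat * t = x := by
    rw [Int.toNat_of_nonneg hq]
    linarith [Int.emod_add_mul_ediv (x - a) t]
  have key := eqvGen_periodicPairing_add_mul (d := d) ht.le (Int.add_emod_sub_mem_Icc ht a x).1
    ((x - a) / t).toNat
  rw [hx'] at key
  exact key hx.2

theorem eqvGen_periodicPairing_iff_modEq (ht : 0 < t) {x y : ℤ} (hx : x ∈ Set.Icc a d)
    (hy : y ∈ Set.Icc a d) : EqvGen (periodicPairing a d t) x y ↔ x ≡ y [ZMOD t] := by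
  refine ⟨modEq_of_eqvGen_periodicPairing, fun h => ?_⟩
  have hrep : (x - a) % t = (y - a) % t := h.sub_right a
  exact EqvGen.trans _ _ _ (EqvGen.symm _ _ (eqvGen_periodicPairing_emod ht hx))
    (hrep ▸ eqvGen_periodicPairing_emod ht hy)

end

/-- A periodic pairing of period `t` on the periodic interval `Icc a d` identifies
points of `Icc a d` exactly when their difference is divisible by `t`; consequently
it has exactly `t` orbits on `Icc a d`, each containing a unique point of
`Icc a (a + t - 1)`. -/
theorem periodic_pairing_orbits (a d t : ℤ) (ht : 1 ≤ t) (had : a + t - 1 ≤ d)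
    (r : ℤ → ℤ → Prop)
    (hr : ∀ x y, r x y ↔ x ∈ Set.Icc a (d - t) ∧ y = x + t) :
    (∀ x ∈ Set.Icc a d, ∀ y ∈ Set.Icc a d, (EqvGen r x y ↔ t ∣ x - y)) ∧
    (∀ x ∈ Set.Icc a d, ∃! y, y ∈ Set.Icc a (a + t - 1) ∧ EqvGen r x y) ∧
    (Nat.card (Quot fun (x y : Set.Icc a d) => EqvGen r x.1 y.1) : ℤ) = t := by
  obtain rfl : r = periodicPairing a d t := funext₂ fun x y => propext (hr x y)
  have ht0 : 0 < t := ht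
  have hrep (x : ℤ) := Int.add_emod_sub_mem_Icc ht0 a x
  have hrep_eqvGen {x} (hx : x ∈ Set.Icc a d) :=
    EqvGen.symm _ _ (eqvGen_periodicPairing_emod ht0 hx)
  refine ⟨fun x hx y hy => ?_, fun x hx => ⟨_, ⟨hrep x, hrep_eqvGen hx⟩, ?_⟩, ?_⟩
  · rw [eqvGen_periodicPairing_iff_modEq ht0 hx hy, Int.modEq_comm, Int.modEq_iff_dvd]
  · rintro y ⟨hy, hxy⟩
    exact Int.eq_of_modEq_of_mem_Icc hy (hrep x) ((modEq_of_eqvGen_periodicPairing hxy).symm.trans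
      (modEq_of_eqvGen_periodicPairing (hrep_eqvGen hx)))
  · have hsub : Set.Icc a (a + t - 1) ⊆ Set.Icc a d := Set.Icc_subset_Icc_right had
    have hperiod : (Nat.card (Set.Icc a (a + t - 1)) : ℤ) = t := by
      rw [Nat.card_coe_set_eq, ← Finset.coe_Icc, Set.ncard_coe_finset, Int.card_Icc]
      omega
    rw [Nat.card_quot_eq_of_transversal ((EqvGen.is_equivalence _).comap Subtype.val)
      (Set.inclusion hsub) (fun x => ⟨⟨_, hrep x⟩, hrep_eqvGen x.2⟩)
      (fun b b' h => Subtype.ext (Int.eq_of_modEq_of_mem_Icc b.2 b'.2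
        (modEq_of_eqvGen_periodicPairing h))), hperiod]
end

section
/- Let a, d, t1, t2, j, a2, b2 be integers with t1 ≥ 1, t2 ≥ 1, a ≤ j, j + t1 − 1 + t2 ≤ d, a2 ≤ j and j + t1 − 1 ≤ b2. Let r1 x y ↔ x ∈ Icc a (d − t1) ∧ y = x + t1 (a periodic pairing of period t1 on the periodic interval Icc a d) and r2 x y ↔ x ∈ Icc a2 b2 ∧ y = x + t2 (an orientation-preserving pairing of translation distance t2 whose domain contains the width-t1 interval Icc j (j + t1 − 1) ⊆ Icc a d, which it translates by t2 into Icc a d). Then for all x, y ∈ Icc a d, EqvGen (r1 ⊔ r2) x y holds if and only if gcd(t1, t2) divides x − y; in particular the orbits of r1 and r2 on Icc a d are the same as those of a single periodic pairing on Icc a d of period gcd(t1, t2). -/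
open Relation

/-- Merging a periodic pairing `r1` of period `t1` on the periodic interval `Icc a d`
with an orientation-preserving pairing `r2` of translation distance `t2` whose domain
contains a width-`t1` subinterval `Icc j (j + t1 - 1)` of `Icc a d` that is translated
by `t2` into `Icc a d`: the joint orbits on `Icc a d` are those of a single periodic
pairing of period `gcd(t1, t2)`. -/
theorem periodic_merger_orbits (a d t1 t2 j a2 b2 : ℤ)
    (ht1 : 1 ≤ t1) (ht2 : 1 ≤ t2)
    (haj : a ≤ j) (hjd : j + t1 - 1 + t2 ≤ d) (ha2 : a2 ≤ j) (hb2 : j + t1 - 1 ≤ b2)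
    (r1 r2 : ℤ → ℤ → Prop)
    (hr1 : ∀ x y, r1 x y ↔ x ∈ Set.Icc a (d - t1) ∧ y = x + t1)
    (hr2 : ∀ x y, r2 x y ↔ x ∈ Set.Icc a2 b2 ∧ y = x + t2) :
    ∀ x ∈ Set.Icc a d, ∀ y ∈ Set.Icc a d,
      (EqvGen (r1 ⊔ r2) x y ↔ (Int.gcd t1 t2 : ℤ) ∣ x - y) := by
  have ht1pos : 0 < t1 := by linarith
  set g : ℤ := (Int.gcd t1 t2 : ℤ) with hgdef
  have hgt1 : g ∣ t1 := Int.gcd_dvd_left t1 t2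
  have hgt2 : g ∣ t2 := Int.gcd_dvd_right t1 t2
  -- basic generator steps
  have step1 : ∀ x : ℤ, a ≤ x → x ≤ d - t1 → EqvGen (r1 ⊔ r2) x (x + t1) := by
    intro x h1 h2
    exact EqvGen.rel _ _ (Or.inl ((hr1 _ _).mpr ⟨⟨h1, h2⟩, rfl⟩))
  have step2 : ∀ x : ℤ, a2 ≤ x → x ≤ b2 → EqvGen (r1 ⊔ r2) x (x + t2) := by
    intro x h1 h2
    exact EqvGen.rel _ _ (Or.inr ((hr2 _ _).mpr ⟨⟨h1, h2⟩, rfl⟩))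
  -- walk upward by multiples of t1
  have up : ∀ n : ℕ, ∀ x : ℤ, a ≤ x → x + n * t1 ≤ d →
      EqvGen (r1 ⊔ r2) x (x + n * t1) := by
    intro n
    induction n with
    | zero => intro x _ _; simpa using EqvGen.refl x
    | succ n ih =>
      intro x hax hxd
      have hnt : (0 : ℤ) ≤ (n : ℤ) * t1 := mul_nonneg (by positivity) (by linarith)
      have hcast : ((n + 1 : ℕ) : ℤ) * t1 = (n : ℤ) * t1 + t1 := by push_cast; ring
      have h1 : EqvGen (r1 ⊔ r2) x (x + t1) := by
        apply step1 x hax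
        rw [hcast] at hxd; linarith
      have h2 : EqvGen (r1 ⊔ r2) (x + t1) (x + t1 + n * t1) := by
        apply ih (x + t1) (by linarith)
        rw [hcast] at hxd; linarith
      have : x + t1 + (n : ℤ) * t1 = x + ((n + 1 : ℕ) : ℤ) * t1 := by rw [hcast]; ring
      rw [this] at h2
      exact EqvGen.trans _ _ _ h1 h2
  -- move any point of [a,d] to its representative in the window [j, j+t1-1]
  have toWin : ∀ x : ℤ, a ≤ x → x ≤ d →
      EqvGen (r1 ⊔ r2) x (j + (x - j) % t1) := by
    intro x hax hxd
    have hr0 : 0 ≤ (x - j) % t1 := Int.emod_nonneg _ (by linarith)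
    have hrlt : (x - j) % t1 < t1 := Int.emod_lt_of_pos _ ht1pos
    have hde : t1 * ((x - j) / t1) + (x - j) % t1 = x - j := Int.mul_ediv_add_emod _ _
    set q : ℤ := (x - j) / t1 with hq
    set y : ℤ := j + (x - j) % t1 with hy
    have hxy : x = y + q * t1 := by rw [hy]; linarith [hde]
    have hay : a ≤ y := by rw [hy]; linarith
    have hyd : y ≤ d := by rw [hy]; linarith
    rcases le_or_gt 0 q with hq0 | hq0
    · -- x = y + q*t1, go up from y then symm
      have hqn : ((q.toNat : ℤ)) = q := Int.toNat_of_nonneg hq0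
      have h := up q.toNat y hay (by rw [hqn]; linarith [hxy])
      rw [hqn, ← hxy] at h
      exact EqvGen.symm _ _ h
    · -- x = y + q*t1 with q < 0: go up from x by -q steps
      have hqn : (((-q).toNat : ℤ)) = -q := Int.toNat_of_nonneg (by linarith)
      have h := up (-q).toNat x hax (by rw [hqn]; nlinarith [hxy, hyd])
      have : x + ((-q).toNat : ℤ) * t1 = y := by rw [hqn]; linarith [hxy]
      rwa [this] at h
  -- single t2 shift followed by reduction into the window
  have shift : ∀ u : ℤ, j ≤ u → u ≤ j + t1 - 1 →
      EqvGen (r1 ⊔ r2) u (j + (u + t2 - j) % t1) := by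
    intro u h1 h2
    have e1 : EqvGen (r1 ⊔ r2) u (u + t2) := step2 u (by linarith) (by linarith)
    have e2 : EqvGen (r1 ⊔ r2) (u + t2) (j + (u + t2 - j) % t1) :=
      toWin (u + t2) (by linarith) (by linarith)
    exact EqvGen.trans _ _ _ e1 e2
  -- iterate the shift n times
  have iter : ∀ n : ℕ, ∀ u : ℤ, j ≤ u → u ≤ j + t1 - 1 →
      EqvGen (r1 ⊔ r2) u (j + (u + n * t2 - j) % t1) := by
    intro n
    induction n with
    | zero =>
      intro u h1 h2
      have : (u + (0 : ℕ) * t2 - j) % t1 = u - j := by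
        push_cast
        rw [show u + 0 * t2 - j = u - j by ring]
        exact Int.emod_eq_of_lt (by linarith) (by linarith)
      rw [this, show j + (u - j) = u by ring]
      exact EqvGen.refl u
    | succ n ih =>
      intro u h1 h2
      set w : ℤ := j + (u + t2 - j) % t1 with hw
      have hw1 : j ≤ w := by
        have := Int.emod_nonneg (u + t2 - j) (show t1 ≠ 0 by linarith)
        rw [hw]; linarith
      have hw2 : w ≤ j + t1 - 1 := by
        have := Int.emod_lt_of_pos (u + t2 - j) ht1pos
        rw [hw]; linarith
      have e1 : EqvGen (r1 ⊔ r2) u w := shift u h1 h2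
      have e2 := ih w hw1 hw2
      have hme : (w + n * t2 - j) % t1 = (u + ((n + 1 : ℕ) : ℤ) * t2 - j) % t1 := by
        have hm1 : ((u + t2 - j) % t1) ≡ (u + t2 - j) [ZMOD t1] :=
          Int.emod_emod_of_dvd _ dvd_rfl
        have hm2 := hm1.add_right ((n : ℤ) * t2)
        have ea : w + (n : ℤ) * t2 - j = (u + t2 - j) % t1 + (n : ℤ) * t2 := by
          rw [hw]; ring
        have eb : u + ((n + 1 : ℕ) : ℤ) * t2 - j = (u + t2 - j) + (n : ℤ) * t2 := by
          push_cast; ring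
        rw [ea, eb]
        exact hm2
      rw [hme] at e2
      exact EqvGen.trans _ _ _ e1 e2
  -- within the window, points congruent mod g are equivalent (Bezout)
  have winE : ∀ u v : ℤ, j ≤ u → u ≤ j + t1 - 1 → j ≤ v → v ≤ j + t1 - 1 →
      g ∣ v - u → EqvGen (r1 ⊔ r2) u v := by
    intro u v hu1 hu2 hv1 hv2 hdvd
    obtain ⟨m, hm⟩ := hdvd
    set A : ℤ := Int.gcdA t1 t2 with hA
    set B : ℤ := Int.gcdB t1 t2 with hB
    have hbez : g = t1 * A + t2 * B := Int.gcd_eq_gcd_ab t1 t2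
    set N : ℤ := (m * B) % t1 with hN
    have hN0 : 0 ≤ N := Int.emod_nonneg _ (by linarith)
    have hNd : t1 ∣ N - m * B := by
      refine ⟨-(m * B / t1), ?_⟩
      have := Int.mul_ediv_add_emod (m * B) t1
      rw [hN]; linarith
    set n : ℕ := N.toNat with hn
    have hnN : (n : ℤ) = N := Int.toNat_of_nonneg hN0
    have h := iter n u hu1 hu2
    have key : (u + (n : ℤ) * t2 - j) % t1 = (v - j) % t1 := by
      have hdv : t1 ∣ (v - j) - (u + (n : ℤ) * t2 - j) := by
        obtain ⟨c, hc⟩ := hNd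
        refine ⟨A * m - c * t2, ?_⟩
        have hnc : (n : ℤ) = m * B + t1 * c := by rw [hnN]; linarith
        calc (v - j) - (u + (n : ℤ) * t2 - j) = (v - u) - (n : ℤ) * t2 := by ring
          _ = g * m - (m * B + t1 * c) * t2 := by rw [← hm, hnc]
          _ = (t1 * A + t2 * B) * m - (m * B + t1 * c) * t2 := by rw [← hbez]
          _ = t1 * (A * m - c * t2) := by ring
      exact (Int.modEq_iff_dvd.mpr hdv)
    have hveq : j + (v - j) % t1 = v := by
      rw [Int.emod_eq_of_lt (by linarith) (by linarith)]; ring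
    rw [key, hveq] at h
    exact h
  -- forward direction
  have fwd : ∀ p q : ℤ, EqvGen (r1 ⊔ r2) p q → g ∣ p - q := by
    intro p q h
    induction h with
    | rel p q hpq =>
      rcases hpq with h | h
      · obtain ⟨_, rfl⟩ := (hr1 _ _).mp h
        rw [show p - (p + t1) = -t1 by ring]
        exact hgt1.neg_right
      · obtain ⟨_, rfl⟩ := (hr2 _ _).mp h
        rw [show p - (p + t2) = -t2 by ring]
        exact hgt2.neg_right
    | refl p => simp
    | symm p q _ ih => rw [show q - p = -(p - q) by ring]; exact ih.neg_right
    | trans p q s _ _ ih1 ih2 =>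
      have := dvd_add ih1 ih2
      rwa [show p - q + (q - s) = p - s by ring] at this
  intro x hx y hy
  obtain ⟨hax, hxd⟩ := hx
  obtain ⟨hay, hyd⟩ := hy
  constructor
  · exact fwd x y
  · intro hdvd
    set u : ℤ := j + (x - j) % t1 with hu
    set v : ℤ := j + (y - j) % t1 with hv
    have hxu : EqvGen (r1 ⊔ r2) x u := toWin x hax hxd
    have hyv : EqvGen (r1 ⊔ r2) y v := toWin y hay hyd
    have hu1 : j ≤ u := by
      have := Int.emod_nonneg (x - j) (show t1 ≠ 0 by linarith); rw [hu]; linarith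
    have hu2 : u ≤ j + t1 - 1 := by
      have := Int.emod_lt_of_pos (x - j) ht1pos; rw [hu]; linarith
    have hv1 : j ≤ v := by
      have := Int.emod_nonneg (y - j) (show t1 ≠ 0 by linarith); rw [hv]; linarith
    have hv2 : v ≤ j + t1 - 1 := by
      have := Int.emod_lt_of_pos (y - j) ht1pos; rw [hv]; linarith
    have hxud : t1 ∣ x - u := by
      refine ⟨(x - j) / t1, ?_⟩
      have := Int.mul_ediv_add_emod (x - j) t1
      rw [hu]; linarith
    have hyvd : t1 ∣ y - v := by
      refine ⟨(y - j) / t1, ?_⟩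
      have := Int.mul_ediv_add_emod (y - j) t1
      rw [hv]; linarith
    have hguv : g ∣ v - u := by
      have h1 : g ∣ x - u := dvd_trans hgt1 hxud
      have h2 : g ∣ y - v := dvd_trans hgt1 hyvd
      have := dvd_sub (dvd_sub h1 h2) hdvd
      rwa [show (x - u) - (y - v) - (x - y) = v - u by ring] at this
    have huv : EqvGen (r1 ⊔ r2) u v := winE u v hu1 hu2 hv1 hv2 hguv
    exact EqvGen.trans _ _ _ (EqvGen.trans _ _ _ hxu huv) (EqvGen.symm _ _ hyv)
end

section
/- Let a1 ≤ d1, a2 ≤ d2, t1 ≥ 1, t2 ≥ 1 be integers such that min(d1, d2) − max(a1, a2) + 1 ≥ t1 + t2 (the periodic intervals Icc a1 d1 and Icc a2 d2 overlap in an interval of width at least t1 + t2). Let r1 x y ↔ x ∈ Icc a1 (d1 − t1) ∧ y = x + t1 and r2 x y ↔ x ∈ Icc a2 (d2 − t2) ∧ y = x + t2 be the corresponding periodic pairings of periods t1 and t2. Then Icc a1 d1 ∪ Icc a2 d2 = Icc (min a1 a2) (max d1 d2), and for all x, y in this union, EqvGen (r1 ⊔ r2) x y holds if and only if gcd(t1,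 t2) divides x − y; that is, the orbits of r1 and r2 on the union are the same as those of a single periodic pairing of period gcd(t1, t2). -/
open Relation

/-- Periodic merger: if two periodic intervals `Icc a1 d1` and `Icc a2 d2`, with periodic
pairings of periods `t1` and `t2`, overlap in an interval of width at least `t1 + t2`,
then their union is the connected interval `Icc (min a1 a2) (max d1 d2)`, and the joint
orbits on the union are those of a single periodic pairing of period `gcd(t1, t2)`. -/
theorem periodic_merger_overlap_orbits (a1 d1 a2 d2 t1 t2 : ℤ)
    (h1 : a1 ≤ d1) (h2 : a2 ≤ d2) (ht1 : 1 ≤ t1) (ht2 : 1 ≤ t2)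
    (hoverlap : min d1 d2 - max a1 a2 + 1 ≥ t1 + t2)
    (r1 r2 : ℤ → ℤ → Prop)
    (hr1 : ∀ x y, r1 x y ↔ x ∈ Set.Icc a1 (d1 - t1) ∧ y = x + t1)
    (hr2 : ∀ x y, r2 x y ↔ x ∈ Set.Icc a2 (d2 - t2) ∧ y = x + t2) :
    Set.Icc a1 d1 ∪ Set.Icc a2 d2 = Set.Icc (min a1 a2) (max d1 d2) ∧
    ∀ x ∈ Set.Icc a1 d1 ∪ Set.Icc a2 d2, ∀ y ∈ Set.Icc a1 d1 ∪ Set.Icc a2 d2,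
      (EqvGen (r1 ⊔ r2) x y ↔ (Int.gcd t1 t2 : ℤ) ∣ x - y) := by
  set M := max a1 a2 with hMdef
  set n := t1 + t2 with hndef
  set g : ℤ := (Int.gcd t1 t2 : ℤ) with hgdef
  have hMa1 : a1 ≤ M := le_max_left _ _
  have hMa2 : a2 ≤ M := le_max_right _ _
  have hD1 : M + n - 1 ≤ d1 := by have := min_le_left d1 d2; omega
  have hD2 : M + n - 1 ≤ d2 := by have := min_le_right d1 d2; omega
  have hn0 : 0 < n := by omega
  have hg1 : g ∣ t1 := Int.gcd_dvd_left t1 t2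
  have hg2 : g ∣ t2 := Int.gcd_dvd_right t1 t2
  have hsup : ∀ x y : ℤ, (r1 ⊔ r2) x y ↔ (r1 x y ∨ r2 x y) := fun x y => Iff.rfl
  -- edges
  have e1 : ∀ x : ℤ, a1 ≤ x → x + t1 ≤ d1 → EqvGen (r1 ⊔ r2) x (x + t1) := by
    intro x hx hx'
    exact EqvGen.rel _ _ ((hsup _ _).2 (Or.inl ((hr1 x (x + t1)).2
      ⟨Set.mem_Icc.2 ⟨hx, by omega⟩, rfl⟩)))
  have e2 : ∀ x : ℤ, a2 ≤ x → x + t2 ≤ d2 → EqvGen (r1 ⊔ r2) x (x + t2) := by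
    intro x hx hx'
    exact EqvGen.rel _ _ ((hsup _ _).2 (Or.inr ((hr2 x (x + t2)).2
      ⟨Set.mem_Icc.2 ⟨hx, by omega⟩, rfl⟩)))
  -- the window-normalizing map
  set w : ℤ → ℤ := fun z => M + (z - M) % n with hwdef
  have hwlb : ∀ z, M ≤ w z := by
    intro z
    have := Int.emod_nonneg (z - M) (by omega : n ≠ 0)
    simp only [hwdef]; omega
  have hwub : ∀ z, w z ≤ M + n - 1 := by
    intro z
    have := Int.emod_lt_of_pos (z - M) hn0
    simp only [hwdef]; omega
  have hwdvd : ∀ z, n ∣ z - w z := by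
    intro z
    refine ⟨(z - M) / n, ?_⟩
    have h := Int.mul_ediv_add_emod (z - M) n
    simp only [hwdef]
    linarith
  have hwcongr : ∀ z z', n ∣ z - z' → w z = w z' := by
    intro z z' hzz
    obtain ⟨c, hc⟩ := hzz
    have h : (z - M) % n = (z' - M) % n := by
      rw [Int.emod_eq_emod_iff_emod_sub_eq_zero]
      exact Int.emod_eq_zero_of_dvd ⟨c, by omega⟩
    simp only [hwdef, h]
  have hwfix : ∀ z, M ≤ z → z ≤ M + n - 1 → w z = z := by
    intro z hz hz'
    simp only [hwdef]
    rw [Int.emod_eq_of_lt (by omega) (by omega)]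
    omega
  -- one Euclidean step inside the window
  have stepA : ∀ x, M ≤ x → x ≤ M + n - 1 → EqvGen (r1 ⊔ r2) x (w (x + t1)) := by
    intro x hx hx'
    by_cases hcase : x + t1 ≤ M + n - 1
    · rw [hwfix (x + t1) (by omega) hcase]
      exact e1 x (by omega) (by omega)
    · have hwx : w (x + t1) = x - t2 := by
        simp only [hwdef]
        have h1' : (x + t1 - M) % n = x + t1 - M - n := by
          conv_lhs => rw [show x + t1 - M = (x + t1 - M - n) + n * 1 by ring]
          rw [Int.add_mul_emod_self_left, Int.emod_eq_of_lt (by omega) (by omega)]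
        rw [h1']
        omega
      rw [hwx]
      have hs := e2 (x - t2) (by omega) (by omega)
      have h2' : x - t2 + t2 = x := by ring
      rw [h2'] at hs
      exact EqvGen.symm _ _ hs
  -- iterate the step
  have stepB : ∀ k : ℕ, ∀ x, M ≤ x → x ≤ M + n - 1 →
      EqvGen (r1 ⊔ r2) x (w (x + (k : ℤ) * t1)) := by
    intro k
    induction k with
    | zero =>
      intro x hx hx'
      have h0 : x + ((0 : ℕ) : ℤ) * t1 = x := by push_cast; ring
      rw [h0, hwfix x hx hx']
      exact EqvGen.refl x
    | succ k ih =>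
      intro x hx hx'
      have h1' := ih x hx hx'
      have hxk := stepA (w (x + (k : ℤ) * t1)) (hwlb _) (hwub _)
      have hcong : w (w (x + (k : ℤ) * t1) + t1) = w (x + ((k + 1 : ℕ) : ℤ) * t1) := by
        apply hwcongr
        obtain ⟨c, hc⟩ := hwdvd (x + (k : ℤ) * t1)
        refine ⟨-c, ?_⟩
        push_cast
        push_cast at hc
        linear_combination -hc
      rw [← hcong]
      exact EqvGen.trans _ _ _ h1' hxk
  -- approach the window from interval 1
  have lemD1 : ∀ N : ℕ, ∀ x, (x - M).natAbs ≤ N → a1 ≤ x → x ≤ d1 →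
      EqvGen (r1 ⊔ r2) x (M + (x - M) % t1) := by
    intro N
    induction N with
    | zero =>
      intro x hxN hxa hxd
      have hxM : x - M = 0 := by omega
      have h0 : M + (x - M) % t1 = x := by rw [hxM]; simp; omega
      rw [h0]; exact EqvGen.refl x
    | succ N ih =>
      intro x hxN hxa hxd
      by_cases hcase1 : M ≤ x ∧ x ≤ M + t1 - 1
      · have h0 : M + (x - M) % t1 = x := by
          rw [Int.emod_eq_of_lt (by omega) (by omega)]; omega
        rw [h0]; exact EqvGen.refl x
      · by_cases hcase2 : x < M
        · have hstep := e1 x hxa (by omega)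
          have hmod : M + (x + t1 - M) % t1 = M + (x - M) % t1 := by
            rw [show x + t1 - M = (x - M) + t1 * 1 by ring, Int.add_mul_emod_self_left]
          by_cases hin : M ≤ x + t1
          · have h0 : M + (x + t1 - M) % t1 = x + t1 := by
              rw [Int.emod_eq_of_lt (by omega) (by omega)]; omega
            rw [← hmod, h0]; exact hstep
          · have hrec := ih (x + t1) (by omega) (by omega) (by omega)
            rw [← hmod]
            exact EqvGen.trans _ _ _ hstep hrec
        · have hxge : M + t1 ≤ x := by omega
          have hstep := e1 (x - t1) (by omega) (by omega)
          have he : x - t1 + t1 = x := by ring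
          rw [he] at hstep
          have hst : EqvGen (r1 ⊔ r2) x (x - t1) := EqvGen.symm _ _ hstep
          have hrec := ih (x - t1) (by omega) (by omega) (by omega)
          have hmod : M + (x - t1 - M) % t1 = M + (x - M) % t1 := by
            rw [show x - t1 - M = (x - M) + t1 * (-1) by ring, Int.add_mul_emod_self_left]
          rw [← hmod]
          exact EqvGen.trans _ _ _ hst hrec
  -- approach the window from interval 2
  have lemD2 : ∀ N : ℕ, ∀ x, (x - M).natAbs ≤ N → a2 ≤ x → x ≤ d2 →
      EqvGen (r1 ⊔ r2) x (M + (x - M) % t2) := by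
    intro N
    induction N with
    | zero =>
      intro x hxN hxa hxd
      have hxM : x - M = 0 := by omega
      have h0 : M + (x - M) % t2 = x := by rw [hxM]; simp; omega
      rw [h0]; exact EqvGen.refl x
    | succ N ih =>
      intro x hxN hxa hxd
      by_cases hcase1 : M ≤ x ∧ x ≤ M + t2 - 1
      · have h0 : M + (x - M) % t2 = x := by
          rw [Int.emod_eq_of_lt (by omega) (by omega)]; omega
        rw [h0]; exact EqvGen.refl x
      · by_cases hcase2 : x < M
        · have hstep := e2 x hxa (by omega)
          have hmod : M + (x + t2 - M) % t2 = M + (x - M) % t2 := by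
            rw [show x + t2 - M = (x - M) + t2 * 1 by ring, Int.add_mul_emod_self_left]
          by_cases hin : M ≤ x + t2
          · have h0 : M + (x + t2 - M) % t2 = x + t2 := by
              rw [Int.emod_eq_of_lt (by omega) (by omega)]; omega
            rw [← hmod, h0]; exact hstep
          · have hrec := ih (x + t2) (by omega) (by omega) (by omega)
            rw [← hmod]
            exact EqvGen.trans _ _ _ hstep hrec
        · have hxge : M + t2 ≤ x := by omega
          have hstep := e2 (x - t2) (by omega) (by omega)
          have he : x - t2 + t2 = x := by ring
          rw [he] at hstep
          have hst : EqvGen (r1 ⊔ r2) x (x - t2) := EqvGen.symm _ _ hstep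
          have hrec := ih (x - t2) (by omega) (by omega) (by omega)
          have hmod : M + (x - t2 - M) % t2 = M + (x - M) % t2 := by
            rw [show x - t2 - M = (x - M) + t2 * (-1) by ring, Int.add_mul_emod_self_left]
          rw [← hmod]
          exact EqvGen.trans _ _ _ hst hrec
  -- Bezout / number theory
  obtain ⟨bx, by', hbez⟩ := Int.gcd_dvd_iff.1 (dvd_refl (Int.gcd t1 t2))
  have lemC : ∀ u v : ℤ, g ∣ u - v → ∃ k : ℕ, n ∣ (u + (k : ℤ) * t1) - v := by
    intro u v hdvd
    obtain ⟨m, hm⟩ := hdvd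
    -- integer solution k0
    set k0 : ℤ := -((bx - by') * m) with hk0def
    have key : n ∣ (u + k0 * t1) - v := by
      refine ⟨by' * m, ?_⟩
      have hb : g = t1 * (bx - by') + n * by' := by
        rw [hgdef, hbez, hndef]; ring
      rw [hk0def]
      linear_combination hm + m * hb
    refine ⟨(k0 % n).toNat, ?_⟩
    have hnn : 0 ≤ k0 % n := Int.emod_nonneg _ (by omega)
    rw [Int.toNat_of_nonneg hnn]
    obtain ⟨ck, hck⟩ := key
    have hdn : k0 - k0 % n = n * (k0 / n) := by
      have := Int.mul_ediv_add_emod k0 n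
      linarith
    refine ⟨ck - (k0 / n) * t1, ?_⟩
    linear_combination hck - t1 * hdn
  -- reach window lemma
  have reach : ∀ x, x ∈ Set.Icc a1 d1 ∪ Set.Icc a2 d2 →
      ∃ u, EqvGen (r1 ⊔ r2) x u ∧ g ∣ x - u ∧ M ≤ u ∧ u ≤ M + n - 1 := by
    intro x hx
    rcases hx with hx | hx
    · rcases Set.mem_Icc.1 hx with ⟨hxa, hxd⟩
      refine ⟨M + (x - M) % t1, lemD1 (x - M).natAbs x le_rfl hxa hxd, ?_, ?_, ?_⟩
      · refine dvd_trans hg1 ⟨(x - M) / t1, ?_⟩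
        have h := Int.mul_ediv_add_emod (x - M) t1
        linarith
      · have := Int.emod_nonneg (x - M) (by omega : t1 ≠ 0); omega
      · have := Int.emod_lt_of_pos (x - M) (by omega : (0:ℤ) < t1); omega
    · rcases Set.mem_Icc.1 hx with ⟨hxa, hxd⟩
      refine ⟨M + (x - M) % t2, lemD2 (x - M).natAbs x le_rfl hxa hxd, ?_, ?_, ?_⟩
      · refine dvd_trans hg2 ⟨(x - M) / t2, ?_⟩
        have h := Int.mul_ediv_add_emod (x - M) t2
        linarith
      · have := Int.emod_nonneg (x - M) (by omega : t2 ≠ 0); omega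
      · have := Int.emod_lt_of_pos (x - M) (by omega : (0:ℤ) < t2); omega
  constructor
  · ext z
    simp only [Set.mem_union, Set.mem_Icc]
    omega
  · intro x hx y hy
    constructor
    · intro h
      clear hx hy
      induction h with
      | rel a b hab =>
        rcases (hsup _ _).1 hab with h | h
        · obtain ⟨_, rfl⟩ := (hr1 a b).1 h
          rw [show a - (a + t1) = -t1 by ring]
          exact (dvd_neg).2 hg1
        · obtain ⟨_, rfl⟩ := (hr2 a b).1 h
          rw [show a - (a + t2) = -t2 by ring]
          exact (dvd_neg).2 hg2
      | refl a => simp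
      | symm a b _ ih => exact (dvd_sub_comm).1 ih
      | trans a b c _ _ ih1 ih2 =>
        rw [show a - c = (a - b) + (b - c) by ring]
        exact dvd_add ih1 ih2
    · intro hdvd
      obtain ⟨u, hxu, hdx, hu1, hu2⟩ := reach x hx
      obtain ⟨v, hyv, hdy, hv1, hv2⟩ := reach y hy
      have hduv : g ∣ u - v := by
        rw [show u - v = ((y - v) - (x - u)) + (x - y) by ring]
        exact dvd_add (dvd_sub hdy hdx) hdvd
      obtain ⟨k, hk⟩ := lemC u v hduv
      have hp := stepB k u hu1 hu2
      have hwv : w (u + (k : ℤ) * t1) = v := by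
        rw [hwcongr (u + (k : ℤ) * t1) v hk]
        exact hwfix v hv1 hv2
      rw [hwv] at hp
      exact EqvGen.trans _ _ _ hxu (EqvGen.trans _ _ _ hp (EqvGen.symm _ _ hyv))
end

section
/- Let N, p, q be integers with 1 ≤ p ≤ q ≤ N and set w = q − p + 1. Let R be a relation on ℤ such that R x y implies x ∈ Icc 1 N, y ∈ Icc 1 N, x ∉ Icc p q and y ∉ Icc p q (the interval Icc p q is static). Define φ : ℤ → ℤ by φ x = x for x < p and φ x = x + w for x ≥ p, and let R' x y ↔ R (φ x) (φ y). Then the number of orbits of EqvGen R on Icc 1 N equals w plus the number of orbits of EqvGen R' on Icc 1 (N − w); that is, contracting a static interval decreases the number of orbits by exactly the width of the contracted interval. -/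
open Relation

/-- Contraction of a static interval: if `Icc p q ⊆ Icc 1 N` meets neither the domain
nor the range of any pairing of the relation `R`, then contracting it decreases the
number of orbits by exactly its width `w = q - p + 1`. -/
theorem contraction_orbit_count (N p q : ℤ) (hp : 1 ≤ p) (hpq : p ≤ q) (hqN : q ≤ N)
    (R : ℤ → ℤ → Prop)
    (hR : ∀ x y, R x y →
      x ∈ Set.Icc 1 N ∧ y ∈ Set.Icc 1 N ∧ x ∉ Set.Icc p q ∧ y ∉ Set.Icc p q)
    (φ : ℤ → ℤ) (hφ : ∀ x, φ x = if x < p then x else x + (q - p + 1))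
    (R' : ℤ → ℤ → Prop) (hR' : ∀ x y, R' x y ↔ R (φ x) (φ y)) :
    (Nat.card (Quot fun (x y : Set.Icc (1 : ℤ) N) => EqvGen R x.1 y.1) : ℤ)
      = (q - p + 1) +
        (Nat.card (Quot fun (x y : Set.Icc (1 : ℤ) (N - (q - p + 1))) =>
          EqvGen R' x.1 y.1) : ℤ) := by
  set w : ℤ := q - p + 1 with hw
  set ψ : ℤ → ℤ := fun z => if z < p then z else z - w with hψdef
  have hφψ : ∀ z, z ∉ Set.Icc p q → φ (ψ z) = z := by
    intro z hz
    simp only [Set.mem_Icc, not_and, not_le] at hz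
    rw [hφ]; simp only [hψdef]
    by_cases h : z < p
    · simp [h]
    · rw [if_neg h, if_neg (by omega)]; omega
  have hψφ : ∀ x, ψ (φ x) = x := by
    intro x; rw [hφ]; simp only [hψdef]
    by_cases h : x < p
    · simp [h]
    · rw [if_neg h, if_neg (by omega)]; omega
  have hφout : ∀ x, φ x ∉ Set.Icc p q := by
    intro x; rw [hφ]; simp only [Set.mem_Icc, not_and, not_le]
    by_cases h : x < p
    · rw [if_pos h]; omega
    · rw [if_neg h]; omega
  have key1 : ∀ a b, EqvGen R a b →
      a = b ∨ (a ∉ Set.Icc p q ∧ b ∉ Set.Icc p q) := by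
    intro a b h
    induction h with
    | rel a b hab => exact Or.inr ⟨(hR a b hab).2.2.1, (hR a b hab).2.2.2⟩
    | refl a => exact Or.inl rfl
    | symm a b _ ih =>
      rcases ih with rfl | ⟨h1, h2⟩
      · exact Or.inl rfl
      · exact Or.inr ⟨h2, h1⟩
    | trans a b c _ _ ih1 ih2 =>
      rcases ih1 with rfl | ⟨h1, h2⟩
      · exact ih2
      · rcases ih2 with rfl | ⟨h3, h4⟩
        · exact Or.inr ⟨h1, h2⟩
        · exact Or.inr ⟨h1, h4⟩
  have fwd : ∀ x y, EqvGen R' x y → EqvGen R (φ x) (φ y) := by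
    intro x y h
    induction h with
    | rel a b hab => exact EqvGen.rel _ _ ((hR' a b).1 hab)
    | refl a => exact EqvGen.refl _
    | symm a b _ ih => exact ih.symm
    | trans a b c _ _ ih1 ih2 => exact ih1.trans _ _ _ ih2
  have bwd : ∀ a b, EqvGen R a b → EqvGen R' (ψ a) (ψ b) := by
    intro a b h
    induction h with
    | rel a b hab =>
      refine EqvGen.rel _ _ ((hR' _ _).2 ?_)
      rw [hφψ a (hR a b hab).2.2.1, hφψ b (hR a b hab).2.2.2]
      exact hab
    | refl a => exact EqvGen.refl _
    | symm a b _ ih => exact ih.symm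
    | trans a b c _ _ ih1 ih2 => exact ih1.trans _ _ _ ih2
  have hψmem : ∀ a : ℤ, a ∈ Set.Icc 1 N → a ∉ Set.Icc p q →
      ψ a ∈ Set.Icc (1 : ℤ) (N - w) := by
    intro a h1 h2
    simp only [Set.mem_Icc, not_and, not_le] at h1 h2 ⊢
    simp only [hψdef]
    by_cases h : a < p
    · rw [if_pos h]; omega
    · rw [if_neg h]; omega
  have hφmem : ∀ x : ℤ, x ∈ Set.Icc (1 : ℤ) (N - w) → φ x ∈ Set.Icc (1 : ℤ) N := by
    intro x h1
    simp only [Set.mem_Icc] at *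
    rw [hφ]
    by_cases h : x < p
    · rw [if_pos h]; omega
    · rw [if_neg h]; omega
  set Q : Set.Icc (1 : ℤ) N → Set.Icc (1 : ℤ) N → Prop :=
    fun x y => EqvGen R x.1 y.1 with hQ
  set Q' : Set.Icc (1 : ℤ) (N - w) → Set.Icc (1 : ℤ) (N - w) → Prop :=
    fun x y => EqvGen R' x.1 y.1 with hQ'
  have hpqN : ∀ a : ℤ, a ∈ Set.Icc p q → a ∈ Set.Icc (1 : ℤ) N := by
    intro a h; simp only [Set.mem_Icc] at *; omega
  let G : Set.Icc p q ⊕ Quot Q' → Quot Q := fun s =>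
    Sum.rec (fun a => Quot.mk Q ⟨a.1, hpqN a.1 a.2⟩)
      (Quot.lift (fun x => Quot.mk Q ⟨φ x.1, hφmem x.1 x.2⟩)
        (fun x y h => Quot.sound (fwd x.1 y.1 h))) s
  let F : Quot Q → Set.Icc p q ⊕ Quot Q' :=
    Quot.lift (fun a => if h : a.1 ∈ Set.Icc p q then Sum.inl ⟨a.1, h⟩
        else Sum.inr (Quot.mk Q' ⟨ψ a.1, hψmem a.1 a.2 h⟩))
      (by
        intro a b hab
        rcases key1 a.1 b.1 hab with heq | ⟨h1, h2⟩
        · have : a = b := Subtype.ext heq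
          rw [this]
        · rw [dif_neg h1, dif_neg h2]
          exact congrArg Sum.inr (Quot.sound (bwd a.1 b.1 hab)))
  have hGF : Function.LeftInverse G F := by
    intro t
    induction t using Quot.ind with
    | _ a =>
      show G (F (Quot.mk Q a)) = Quot.mk Q a
      by_cases h : a.1 ∈ Set.Icc p q
      · show G (dite _ _ _) = _
        rw [dif_pos h]
      · show G (dite _ _ _) = _
        rw [dif_neg h]
        exact congrArg (Quot.mk Q) (Subtype.ext (hφψ a.1 h))
  have hFG : Function.RightInverse G F := by
    intro s
    rcases s with a | t
    · show F (Quot.mk Q _) = _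
      show dite _ _ _ = _
      rw [dif_pos a.2]
    · induction t using Quot.ind with
      | _ x =>
        show F (Quot.mk Q _) = _
        show dite _ _ _ = _
        rw [dif_neg (hφout x.1)]
        exact congrArg Sum.inr (congrArg (Quot.mk Q') (Subtype.ext (hψφ x.1)))
  let e : Quot Q ≃ (Set.Icc p q ⊕ Quot Q') := ⟨F, G, hGF, hFG⟩
  have fin1 : Finite (Set.Icc (1 : ℤ) N) := (Set.finite_Icc _ _).to_subtype
  have fin2 : Finite (Set.Icc (1 : ℤ) (N - w)) := (Set.finite_Icc _ _).to_subtype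
  have fin3 : Finite (Set.Icc p q) := (Set.finite_Icc _ _).to_subtype
  have hcard : Nat.card (Quot Q) = Nat.card (Set.Icc p q) + Nat.card (Quot Q') := by
    rw [Nat.card_congr e, Nat.card_sum]
  have hIcc : (Nat.card (Set.Icc p q) : ℤ) = w := by
    rw [Nat.card_eq_fintype_card]; convert Int.card_fintype_Icc_of_le (a := p) (b := q) (by omega) using 2
    omega
  rw [hcard]
  push_cast
  rw [hIcc]
end

section
/- Let N, N', a, b, t be integers with 1 ≤ a ≤ b, t ≥ 1, b + t = N and a + t ≤ N' + 1 ≤ N (so Icc (N'+1) N is contained in the range Icc (a+t) N of the pairing). Let R0 be any relation on ℤ such that R0 x y implies x ∈ Icc 1 N' and y ∈ Icc 1 N' (no other pairing meets Icc (N'+1) N). Let rg x y ↔ x ∈ Icc a b ∧ y = x + t and let rg' x y ↔ x ∈ Icc a (b − (N − N')) ∧ y = x + t be the truncated pairing. Then every point of Icc 1 N is EqvGen (R0 ⊔ rg)-equivalent to a point of Icc 1 N', two points of Icc 1 N' are EqvGen (R0 ⊔ rg)-equivalent if and only if they are EqvGen (R0 ⊔ rg')-equivalent, and hence the number of orbits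 of EqvGen (R0 ⊔ rg) on Icc 1 N equals the number of orbits of EqvGen (R0 ⊔ rg') on Icc 1 N'. -/
open Relation

/-- Auxiliary retraction: subtract `t` from `x` repeatedly until `≤ N'`. -/
def truncPhi (N' t x : ℤ) : ℤ := x - t * max 0 ((x - N' + t - 1) / t)

lemma truncPhi_of_le (N' t x : ℤ) (ht : 1 ≤ t) (h : x ≤ N') : truncPhi N' t x = x := by
  have h1 : (x - N' + t - 1) / t < 1 :=
    (Int.ediv_lt_iff_lt_mul (by omega)).2 (by omega)
  have : max 0 ((x - N' + t - 1) / t) = 0 := by omega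
  simp [truncPhi, this]

lemma truncPhi_step (N' t x : ℤ) (ht : 1 ≤ t) (h : N' < x) :
    truncPhi N' t x = truncPhi N' t (x - t) := by
  have hq : (x - N' + t - 1) / t = (x - t - N' + t - 1) / t + 1 := by
    have := Int.add_mul_ediv_right (x - t - N' + t - 1) 1 (show t ≠ 0 by omega)
    rw [show x - N' + t - 1 = x - t - N' + t - 1 + 1 * t by ring, this]
  have hq0 : 0 ≤ (x - t - N' + t - 1) / t := Int.ediv_nonneg (by omega) (by omega)
  unfold truncPhi
  rw [hq, max_eq_right hq0, max_eq_right (by omega)]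
  ring

/-- Truncation of an orientation-preserving pairing `rg : Icc a b → Icc (a+t) N` when
the tail `Icc (N'+1) N` meets the range of no other pairing: every point of `Icc 1 N`
is equivalent to a point of `Icc 1 N'`, the equivalence on `Icc 1 N'` is unchanged by
truncating the pairing, and hence the number of orbits of `R0 ⊔ rg` on `Icc 1 N` equals
the number of orbits of `R0 ⊔ rg'` on `Icc 1 N'`. -/
theorem truncation_preserves_orbit_count (N N' a b t : ℤ)
    (ha : 1 ≤ a) (hab : a ≤ b) (ht : 1 ≤ t) (hbN : b + t = N)
    (h1 : a + t ≤ N' + 1) (h2 : N' + 1 ≤ N)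
    (R0 : ℤ → ℤ → Prop) (hR0 : ∀ x y, R0 x y → x ∈ Set.Icc 1 N' ∧ y ∈ Set.Icc 1 N')
    (rg rg' : ℤ → ℤ → Prop)
    (hrg : ∀ x y, rg x y ↔ x ∈ Set.Icc a b ∧ y = x + t)
    (hrg' : ∀ x y, rg' x y ↔ x ∈ Set.Icc a (b - (N - N')) ∧ y = x + t) :
    (∀ x ∈ Set.Icc (1 : ℤ) N, ∃ y ∈ Set.Icc (1 : ℤ) N', EqvGen (R0 ⊔ rg) x y) ∧
    (∀ x ∈ Set.Icc (1 : ℤ) N', ∀ y ∈ Set.Icc (1 : ℤ) N',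
      (EqvGen (R0 ⊔ rg) x y ↔ EqvGen (R0 ⊔ rg') x y)) ∧
    Nat.card (Quot fun (x y : Set.Icc (1 : ℤ) N) => EqvGen (R0 ⊔ rg) x.1 y.1)
      = Nat.card (Quot fun (x y : Set.Icc (1 : ℤ) N') => EqvGen (R0 ⊔ rg') x.1 y.1) := by
  -- Claim 1
  have claim1 : ∀ n : ℕ, ∀ x, x ∈ Set.Icc (1 : ℤ) N → (x - N').toNat ≤ n →
      ∃ y ∈ Set.Icc (1 : ℤ) N', EqvGen (R0 ⊔ rg) x y := by
    intro n
    induction n with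
    | zero =>
      intro x hx hn
      refine ⟨x, ⟨hx.1, by omega⟩, EqvGen.refl x⟩
    | succ n ih =>
      intro x hx hn
      by_cases hle : x ≤ N'
      · exact ⟨x, ⟨hx.1, hle⟩, EqvGen.refl x⟩
      · have hx1 := hx.1; have hx2 := hx.2
        simp only [Set.mem_Icc] at hx1 hx2 ⊢
        have hrel : rg (x - t) x := (hrg (x - t) x).2 ⟨⟨by omega, by omega⟩, by ring⟩
        obtain ⟨y, hy, hxy⟩ := ih (x - t) ⟨by omega, by omega⟩ (by omega)
        exact ⟨y, hy, EqvGen.trans _ _ _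
          (EqvGen.symm _ _ (EqvGen.rel _ _ (Or.inr hrel))) hxy⟩
  have claim1' : ∀ x ∈ Set.Icc (1 : ℤ) N, ∃ y ∈ Set.Icc (1 : ℤ) N',
      EqvGen (R0 ⊔ rg) x y := fun x hx => claim1 (x - N').toNat x hx le_rfl
  -- rg' ≤ rg
  have hmono : ∀ x y, EqvGen (R0 ⊔ rg') x y → EqvGen (R0 ⊔ rg) x y := by
    intro x y h
    refine EqvGen.mono ?_ _ _ h
    rintro x y (h | h)
    · exact Or.inl h
    · refine Or.inr ((hrg x y).2 ?_)
      obtain ⟨⟨hx1, hx2⟩, hy⟩ := (hrg' x y).1 h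
      exact ⟨⟨hx1, by omega⟩, hy⟩
  -- φ pushes the big equivalence to the small one
  have key : ∀ x y, EqvGen (R0 ⊔ rg) x y →
      EqvGen (R0 ⊔ rg') (truncPhi N' t x) (truncPhi N' t y) := by
    intro x y h
    induction h with
    | rel x y hxy =>
      rcases hxy with h0 | hg
      · obtain ⟨hx, hy⟩ := hR0 x y h0
        rw [truncPhi_of_le N' t x ht hx.2, truncPhi_of_le N' t y ht hy.2]
        exact EqvGen.rel _ _ (Or.inl h0)
      · obtain ⟨⟨hx1, hx2⟩, hy⟩ := (hrg x y).1 hg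
        by_cases hle : y ≤ N'
        · rw [truncPhi_of_le N' t x ht (by omega), truncPhi_of_le N' t y ht hle]
          exact EqvGen.rel _ _ (Or.inr ((hrg' x y).2 ⟨⟨hx1, by omega⟩, hy⟩))
        · rw [truncPhi_step N' t y ht (by omega), show y - t = x by omega]
          exact EqvGen.refl _
    | refl x => exact EqvGen.refl _
    | symm x y _ ih => exact EqvGen.symm _ _ ih
    | trans x y z _ _ ih1 ih2 => exact EqvGen.trans _ _ _ ih1 ih2
  have claim2 : ∀ x ∈ Set.Icc (1 : ℤ) N', ∀ y ∈ Set.Icc (1 : ℤ) N',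
      (EqvGen (R0 ⊔ rg) x y ↔ EqvGen (R0 ⊔ rg') x y) := by
    intro x hx y hy
    constructor
    · intro h
      have := key x y h
      rwa [truncPhi_of_le N' t x ht hx.2, truncPhi_of_le N' t y ht hy.2] at this
    · exact hmono x y
  refine ⟨claim1', claim2, ?_⟩
  -- the bijection between quotients
  have hsub : ∀ y : Set.Icc (1 : ℤ) N', y.1 ∈ Set.Icc (1 : ℤ) N :=
    fun y => ⟨y.2.1, by have := y.2.2; omega⟩
  choose c hc hceq using claim1'
  let C : Set.Icc (1 : ℤ) N → Set.Icc (1 : ℤ) N' := fun x => ⟨c x.1 x.2, hc x.1 x.2⟩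
  have hF : ∀ (x y : Set.Icc (1 : ℤ) N), EqvGen (R0 ⊔ rg) x.1 y.1 →
      Quot.mk (fun (x y : Set.Icc (1 : ℤ) N') => EqvGen (R0 ⊔ rg') x.1 y.1) (C x)
        = Quot.mk _ (C y) := by
    intro x y hxy
    refine Quot.sound ?_
    have : EqvGen (R0 ⊔ rg) (C x).1 (C y).1 :=
      EqvGen.trans _ _ _ (EqvGen.symm _ _ (hceq x.1 x.2))
        (EqvGen.trans _ _ _ hxy (hceq y.1 y.2))
    exact (claim2 _ (C x).2 _ (C y).2).1 this
  have hG : ∀ (x y : Set.Icc (1 : ℤ) N'), EqvGen (R0 ⊔ rg') x.1 y.1 →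
      Quot.mk (fun (x y : Set.Icc (1 : ℤ) N) => EqvGen (R0 ⊔ rg) x.1 y.1) ⟨x.1, hsub x⟩
        = Quot.mk _ ⟨y.1, hsub y⟩ := by
    intro x y hxy
    exact Quot.sound (hmono _ _ hxy)
  refine Nat.card_congr ⟨Quot.lift (fun x => Quot.mk _ (C x)) hF,
    Quot.lift (fun y => Quot.mk _ ⟨y.1, hsub y⟩) hG, ?_, ?_⟩
  · intro q
    induction q using Quot.ind with
    | _ x =>
      show Quot.mk _ (⟨(C x).1, hsub (C x)⟩ : Set.Icc (1 : ℤ) N) = Quot.mk _ x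
      exact Quot.sound (EqvGen.symm _ _ (hceq x.1 x.2))
  · intro q
    induction q using Quot.ind with
    | _ y =>
      show Quot.mk _ (C ⟨y.1, hsub y⟩) = Quot.mk _ y
      refine Quot.sound ?_
      have h : EqvGen (R0 ⊔ rg) (C ⟨y.1, hsub y⟩).1 y.1 :=
        EqvGen.symm _ _ (hceq y.1 (hsub y))
      exact (claim2 _ (C ⟨y.1, hsub y⟩).2 _ y.2).1 h
end

section
/- Let N, N', a, b be integers with 1 ≤ a ≤ b < a + N − b ≤ N' + 1 ≤ N (an orientation-reversing pairing with domain Icc a b disjoint from its range Icc (a+N−b) N, with Icc (N'+1) N contained in the range). Let R0 be any relation on ℤ such that R0 x y implies x ∈ Icc 1 N' and y ∈ Icc 1 N' (no other pairing meets Icc (N'+1) N). Let rg x y ↔ x ∈ Icc a b ∧ y = a + N − x and let rg' x y ↔ x ∈ Icc (a + N − N') b ∧ y = a + N − x be the truncated pairing. Then the number of orbits of EqvGen (R0 ⊔ rg) on Icc 1 N equals the number of orbits of EqvGen (R0 ⊔ rg') on Icc 1 N'. -/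
open Relation

/-- Truncation of an orientation-reversing pairing with domain `Icc a b` disjoint from
its range `Icc (a+N-b) N`, when the tail `Icc (N'+1) N` lies in the range and meets no
other pairing: the number of orbits of `R0 ⊔ rg` on `Icc 1 N` equals the number of
orbits of the truncated system `R0 ⊔ rg'` on `Icc 1 N'`. -/
theorem truncation_reversing_preserves_orbit_count (N N' a b : ℤ)
    (ha : 1 ≤ a) (hab : a ≤ b) (hdisj : b < a + N - b)
    (h1 : a + N - b ≤ N' + 1) (h2 : N' + 1 ≤ N)
    (R0 : ℤ → ℤ → Prop) (hR0 : ∀ x y, R0 x y → x ∈ Set.Icc 1 N' ∧ y ∈ Set.Icc 1 N')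
    (rg rg' : ℤ → ℤ → Prop)
    (hrg : ∀ x y, rg x y ↔ x ∈ Set.Icc a b ∧ y = a + N - x)
    (hrg' : ∀ x y, rg' x y ↔ x ∈ Set.Icc (a + N - N') b ∧ y = a + N - x) :
    Nat.card (Quot fun (x y : Set.Icc (1 : ℤ) N) => EqvGen (R0 ⊔ rg) x.1 y.1)
      = Nat.card (Quot fun (x y : Set.Icc (1 : ℤ) N') => EqvGen (R0 ⊔ rg') x.1 y.1) := by
  have hbN' : b ≤ N' := by omega
  -- rg' implies rg
  have hsub : ∀ x y, (R0 ⊔ rg') x y → (R0 ⊔ rg) x y := by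
    intro x y h
    rcases h with h | h
    · exact Or.inl h
    · rw [hrg'] at h
      refine Or.inr ((hrg x y).mpr ?_)
      rcases h with ⟨⟨hx1, hx2⟩, hy⟩
      exact ⟨⟨by omega, hx2⟩, hy⟩
  have hE'E : ∀ x y, EqvGen (R0 ⊔ rg') x y → EqvGen (R0 ⊔ rg) x y :=
    fun x y h => Relation.EqvGen.mono hsub x y h
  -- the fold map
  set g : ℤ → ℤ := fun x => if N' < x then a + N - x else x with hg
  have hgle : ∀ x, x ≤ N' → g x = x := by
    intro x hx; simp only [hg]; rw [if_neg (by omega)]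
  -- key: one step of R0 ⊔ rg becomes EqvGen (R0 ⊔ rg') after folding
  have key : ∀ x y, (R0 ⊔ rg) x y → EqvGen (R0 ⊔ rg') (g x) (g y) := by
    intro x y h
    rcases h with h | h
    · obtain ⟨⟨_, hx⟩, ⟨_, hy⟩⟩ := hR0 x y h
      rw [hgle x hx, hgle y hy]
      exact EqvGen.rel _ _ (Or.inl h)
    · rw [hrg] at h
      obtain ⟨⟨hx1, hx2⟩, hy⟩ := h
      rw [hgle x (by omega)]
      by_cases hyN : y ≤ N'
      · rw [hgle y hyN]
        refine EqvGen.rel _ _ (Or.inr ?_)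
        rw [hrg']
        exact ⟨⟨by omega, hx2⟩, hy⟩
      · have : g y = x := by simp only [hg]; rw [if_pos (by omega)]; omega
        rw [this]
        exact EqvGen.refl x
  have main : ∀ x y, EqvGen (R0 ⊔ rg) x y → EqvGen (R0 ⊔ rg') (g x) (g y) := by
    intro x y h
    induction h with
    | rel u v huv => exact key u v huv
    | refl u => exact EqvGen.refl _
    | symm u v _ ih => exact EqvGen.symm _ _ ih
    | trans u v w _ _ ih1 ih2 => exact EqvGen.trans _ _ _ ih1 ih2
  have hEE' : ∀ x y, x ≤ N' → y ≤ N' → EqvGen (R0 ⊔ rg) x y → EqvGen (R0 ⊔ rg') x y := by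
    intro x y hx hy h
    have := main x y h
    rwa [hgle x hx, hgle y hy] at this
  -- the quotient relations
  set r : Set.Icc (1 : ℤ) N → Set.Icc (1 : ℤ) N → Prop :=
    fun x y => EqvGen (R0 ⊔ rg) x.1 y.1 with hr
  set r' : Set.Icc (1 : ℤ) N' → Set.Icc (1 : ℤ) N' → Prop :=
    fun x y => EqvGen (R0 ⊔ rg') x.1 y.1 with hr'
  have incl : ∀ x : Set.Icc (1 : ℤ) N', x.1 ∈ Set.Icc (1 : ℤ) N := by
    rintro ⟨x, hx⟩
    simp only [Set.mem_Icc] at hx ⊢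
    omega
  -- the map between quotients
  set F : Quot r' → Quot r :=
    Quot.lift (fun x => Quot.mk r ⟨x.1, incl x⟩)
      (by
        intro x y hxy
        exact Quot.sound (hE'E x.1 y.1 hxy)) with hF
  have collapseE : ∀ p q : Set.Icc (1 : ℤ) N, EqvGen r p q → EqvGen (R0 ⊔ rg) p.1 q.1 := by
    intro p q h
    induction h with
    | rel u v huv => exact huv
    | refl u => exact EqvGen.refl _
    | symm u v _ ih => exact EqvGen.symm _ _ ih
    | trans u v w _ _ ih1 ih2 => exact EqvGen.trans _ _ _ ih1 ih2
  have hinj : Function.Injective F := by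
    intro p q
    induction p using Quot.ind with | _ x =>
    induction q using Quot.ind with | _ y =>
    intro h
    simp only [hF] at h
    have h2' := Quot.eq.mp h
    have h3 := collapseE _ _ h2'
    exact Quot.sound (hEE' x.1 y.1 x.2.2 y.2.2 h3)
  have hsurj : Function.Surjective F := by
    intro q
    induction q using Quot.ind with | _ x =>
    obtain ⟨x, hx⟩ := x
    have hx1 : 1 ≤ x := hx.1
    have hx2 : x ≤ N := hx.2
    by_cases hxN : x ≤ N'
    · exact ⟨Quot.mk r' ⟨x, Set.mem_Icc.mpr ⟨hx1, hxN⟩⟩, rfl⟩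
    · -- x is in the tail; its partner p = a + N - x is in [1, N']
      have hp : a + N - x ∈ Set.Icc (1 : ℤ) N' := Set.mem_Icc.mpr ⟨by omega, by omega⟩
      refine ⟨Quot.mk r' ⟨a + N - x, hp⟩, ?_⟩
      simp only [hF]
      refine Quot.sound ?_
      show EqvGen (R0 ⊔ rg) (a + N - x) x
      refine EqvGen.rel _ _ (Or.inr ?_)
      rw [hrg]
      refine ⟨Set.mem_Icc.mpr ⟨by omega, by omega⟩, by omega⟩
  exact (Nat.card_eq_of_bijective F ⟨hinj, hsurj⟩).symm
end

section
/- Let t1 ≥ 1 and t2 be integers, and let a1 ≤ b1 and a2 ≤ b2 be integers such that for every x ∈ Icc a2 b2 one has x + t2 − t1 ∈ Icc a1 b1 (the range of the second pairing is contained in the range Icc (a1+t1) (b1+t1) of the first). Let r1 x y ↔ x ∈ Icc a1 b1 ∧ y = x + t1, let r2 x y ↔ x ∈ Icc a2 b2 ∧ y = x + t2, and let r2' x y ↔ x ∈ Icc a2 b2 ∧ y = x + (t2 − t1) (the transmission of r2 by r1). Then for all x, y, EqvGen (r1 ⊔ r2) x y holds if and only if EqvGen (r1 ⊔ r2') x y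 holds; transmission does not change the orbit equivalence. -/
/-! Every `r2`-step `x ↦ x + t2` factors as the `r2'`-step `x ↦ x + (t2 - t1)` followed by the
`r1`-step `x + (t2 - t1) ↦ x + t2`, which exists because `hrange` puts `x + (t2 - t1)` in the
domain of `r1`. Hence each generating relation lies in the equivalence generated by the other. -/

open Relation

namespace Relation

variable {α : Type*} {r s t : α → α → Prop}

theorem eqvGen_sup_le_of_reroute (h : ∀ x y, s x y → ∃ z, t x z ∧ SymmGen r z y) :
    EqvGen (r ⊔ s) ≤ EqvGen (r ⊔ t) := by
  refine EqvGen.eqvGen_le ?_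
  rintro x y (hr | hs)
  · exact .rel _ _ (.inl hr)
  · obtain ⟨z, htxz, hrzy⟩ := h x y hs
    exact _root_.trans (EqvGen.rel _ _ (.inr htxz))
      (EqvGen.mono (fun _ _ => .inl) _ _ (EqvGen.symmGen_le_eqvGen r _ _ hrzy))

end Relation

theorem transmission_preserves_orbits_general (t1 t2 a1 b1 a2 b2 : ℤ)
    (hrange : ∀ x ∈ Set.Icc a2 b2, x + t2 - t1 ∈ Set.Icc a1 b1)
    (r1 r2 r2' : ℤ → ℤ → Prop)
    (hr1 : ∀ x y, r1 x y ↔ x ∈ Set.Icc a1 b1 ∧ y = x + t1)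
    (hr2 : ∀ x y, r2 x y ↔ x ∈ Set.Icc a2 b2 ∧ y = x + t2)
    (hr2' : ∀ x y, r2' x y ↔ x ∈ Set.Icc a2 b2 ∧ y = x + (t2 - t1)) :
    ∀ x y, EqvGen (r1 ⊔ r2) x y ↔ EqvGen (r1 ⊔ r2') x y := by
  have hr1_bridge : ∀ x ∈ Set.Icc a2 b2, r1 (x + (t2 - t1)) (x + t2) := fun x hx =>
    (hr1 _ _).2 ⟨by simpa only [add_sub_assoc] using hrange x hx, by ring⟩
  intro x y
  constructor
  · refine eqvGen_sup_le_of_reroute (fun x y h => ?_) x y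
    obtain ⟨hx, rfl⟩ := (hr2 x y).1 h
    exact ⟨_, (hr2' _ _).2 ⟨hx, rfl⟩, .inl (hr1_bridge x hx)⟩
  · refine eqvGen_sup_le_of_reroute (fun x z h => ?_) x y
    obtain ⟨hx, rfl⟩ := (hr2' x z).1 h
    exact ⟨_, (hr2 _ _).2 ⟨hx, rfl⟩, .inr (hr1_bridge x hx)⟩

/-- Transmission: if the range of `r2` is contained in the range of `r1`, then replacing
`r2` by its composition with the inverse of `r1` (translation distance `t2 - t1`) does
not change the orbit equivalence. -/
theorem transmission_preserves_orbits (t1 t2 a1 b1 a2 b2 : ℤ)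
    (ht1 : 1 ≤ t1) (h1 : a1 ≤ b1) (h2 : a2 ≤ b2)
    (hrange : ∀ x ∈ Set.Icc a2 b2, x + t2 - t1 ∈ Set.Icc a1 b1)
    (r1 r2 r2' : ℤ → ℤ → Prop)
    (hr1 : ∀ x y, r1 x y ↔ x ∈ Set.Icc a1 b1 ∧ y = x + t1)
    (hr2 : ∀ x y, r2 x y ↔ x ∈ Set.Icc a2 b2 ∧ y = x + t2)
    (hr2' : ∀ x y, r2' x y ↔ x ∈ Set.Icc a2 b2 ∧ y = x + (t2 - t1)) :
    ∀ x y, EqvGen (r1 ⊔ r2) x y ↔ EqvGen (r1 ⊔ r2') x y :=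
  transmission_preserves_orbits_general t1 t2 a1 b1 a2 b2 hrange r1 r2 r2' hr1 hr2 hr2'
end

section
/- Let r ≥ 1 be a natural number and Z an integer. Let c, d : Fin r → ℤ satisfy: c i ≤ d i for all i; c (i+1) ≤ c i and c i ≤ d (i+1) ≤ Z whenever i + 1 < r; and d 0 = Z. Let d' be an integer with c (r−1) ≤ d' and 2(d' − c (r−1) + 1) < Z − c (r−1) + 1 (the final truncated range Icc (c (r−1)) d' is not Z-close). Define w i = d i − c i + 1 for all i, and w' i = d (i+1) − c i + 1 for i + 1 < r, w' (r−1) = d' − c (r−1) + 1. Then the product over i of the rational numbers (w' i)/(w i) is strictly less than 1/2. -/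
/-!
Write `ρᵢ = wᵢ / (Z - c i + 1)` for the proportion of `Icc (c i) Z` covered by the `i`-th
range, so `ρ₀ = 1`. Lowering the left endpoint of an interval whose right end stays put (and
at most `Z`) can only increase the proportion of `Icc _ Z` it covers; since `c (i+1) ≤ c i`,
the truncated width therefore satisfies `w' i / (Z - c i + 1) ≤ ρ_{i+1}`. Hence each ratio
`w' i / w i` is at most `ρ_{i+1} / ρᵢ`, the product telescopes, and all that remains is the
proportion `w' (r-1) / (Z - c (r-1) + 1)` of the last truncated range, which is below `1/2`
because that range is not `Z`-close.
-/

open Finset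

section Telescoping

variable {α : Type*} [Field α] [LinearOrder α] [IsStrictOrderedRing α]

theorem div_le_add_div_add {a b c : α} (hc : 0 ≤ c) (hab : a ≤ b) (hb : 0 < b) :
    a / b ≤ (a + c) / (b + c) := by
  rw [div_le_div_iff₀ hb (by linarith)]
  nlinarith

theorem prod_range_div_le_div_of_le_succ {p q : ℕ → α} {n : ℕ} (hp : ∀ i ≤ n, 0 < p i)
    (hq : ∀ i < n, 0 ≤ q i) (hqp : ∀ i < n, q i ≤ p (i + 1)) :
    ∏ i ∈ range n, q i / p i ≤ p n / p 0 := by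
  induction n with
  | zero => simp [(hp 0 le_rfl).ne']
  | succ n ih =>
    have hpn := hp n n.le_succ
    calc ∏ i ∈ range (n + 1), q i / p i
        = (∏ i ∈ range n, q i / p i) * (q n / p n) := prod_range_succ _ _
      _ ≤ p n / p 0 * (q n / p n) := by
          gcongr
          · exact div_nonneg (hq n n.lt_succ_self) hpn.le
          · exact ih (fun i hi ↦ hp i (by omega)) (fun i hi ↦ hq i (by omega))
              (fun i hi ↦ hqp i (by omega))
      _ = q n / p 0 := by field_simp
      _ ≤ p (n + 1) / p 0 := by
          gcongr
          · exact (hp 0 (Nat.zero_le _)).le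
          · exact hqp n n.lt_succ_self

end Telescoping

def iccWidth (a b : ℤ) : ℚ := ((b - a + 1 : ℤ) : ℚ)

theorem iccWidth_pos {a b : ℤ} (h : a ≤ b) : 0 < iccWidth a b := by
  unfold iccWidth
  exact_mod_cast (by omega : (0 : ℤ) < b - a + 1)

theorem iccWidth_div_iccWidth_le {c' c d Z : ℤ} (hc : c' ≤ c) (hcd : c ≤ d) (hdZ : d ≤ Z) :
    iccWidth c d / iccWidth c Z ≤ iccWidth c' d / iccWidth c' Z := by
  have key := div_le_add_div_add (a := iccWidth c d) (b := iccWidth c Z)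
    (c := ((c - c' : ℤ) : ℚ))
    (by exact_mod_cast sub_nonneg.2 hc)
    (by unfold iccWidth; exact_mod_cast (by omega : d - c + 1 ≤ Z - c + 1))
    (iccWidth_pos (hcd.trans hdZ))
  refine key.trans_eq ?_
  congr 1 <;> push_cast [iccWidth] <;> ring

theorem prod_truncated_width_div_width_le {m : ℕ} {Z : ℤ} {c d : ℕ → ℤ}
    (hcd : ∀ i ≤ m, c i ≤ d i)
    (hchain : ∀ i < m, c (i + 1) ≤ c i ∧ c i ≤ d (i + 1) ∧ d (i + 1) ≤ Z)
    (hd0 : d 0 = Z) :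
    ∏ i ∈ range m, iccWidth (c i) (d (i + 1)) / iccWidth (c i) (d i)
      ≤ iccWidth (c m) (d m) / iccWidth (c m) Z := by
  have hdZ : ∀ i ≤ m, d i ≤ Z := fun
    | 0, _ => hd0.le
    | i + 1, hi => (hchain i hi).2.2
  have hW : ∀ i ≤ m, 0 < iccWidth (c i) Z :=
    fun i hi ↦ iccWidth_pos ((hcd i hi).trans (hdZ i hi))
  set p : ℕ → ℚ := fun i ↦ iccWidth (c i) (d i) / iccWidth (c i) Z
  calc ∏ i ∈ range m, iccWidth (c i) (d (i + 1)) / iccWidth (c i) (d i)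
      = ∏ i ∈ range m, iccWidth (c i) (d (i + 1)) / iccWidth (c i) Z / p i := by
        refine prod_congr rfl fun i hi ↦ ?_
        rw [div_div_div_cancel_right₀ (hW i (by simp at hi; omega)).ne']
    _ ≤ p m / p 0 := by
        refine prod_range_div_le_div_of_le_succ
          (fun i hi ↦ div_pos (iccWidth_pos (hcd i hi)) (hW i hi))
          (fun i hi ↦ ?_) (fun i hi ↦ ?_)
        · obtain ⟨-, hcd', -⟩ := hchain i hi
          exact div_nonneg (iccWidth_pos hcd').le (hW i hi.le).le
        · obtain ⟨hc, hcd', hdZ'⟩ := hchain i hi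
          exact iccWidth_div_iccWidth_le hc hcd' hdZ'
    _ = p m := by simp [p, hd0, (hW 0 (Nat.zero_le m)).ne']

/-- After a series of truncations of successive maximal pairings with ranges
`Icc (c i) (d i)`, ending with a final truncated range `Icc (c (r-1)) d'` that is not
`Z`-close, the product of the width ratios (truncated width over original width) is
less than `1/2`; thus the complexity decreases by a factor of at least two. -/
theorem truncation_series_halves_complexity (r : ℕ) (hr : 1 ≤ r) (Z d' : ℤ)
    (c d : ℕ → ℤ)
    (hcd : ∀ i < r, c i ≤ d i)
    (hchain : ∀ i, i + 1 < r → c (i + 1) ≤ c i ∧ c i ≤ d (i + 1) ∧ d (i + 1) ≤ Z)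
    (hd0 : d 0 = Z)
    (hd' : c (r - 1) ≤ d')
    (hnotclose : 2 * (d' - c (r - 1) + 1) < Z - c (r - 1) + 1) :
    (∏ i ∈ Finset.range r,
        (((if i + 1 < r then d (i + 1) - c i + 1 else d' - c (r - 1) + 1 : ℤ) : ℚ) /
          ((d i - c i + 1 : ℤ) : ℚ)))
      < 1 / 2 := by
  obtain ⟨m, rfl⟩ : ∃ m, r = m + 1 := ⟨r - 1, by omega⟩
  simp only [Nat.add_sub_cancel] at hd' hnotclose ⊢
  have hprefix : ∏ i ∈ range m, iccWidth (c i) (d (i + 1)) / iccWidth (c i) (d i)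
      ≤ iccWidth (c m) (d m) / iccWidth (c m) Z :=
    prod_truncated_width_div_width_le (fun i hi ↦ hcd i (by omega))
      (fun i hi ↦ hchain i (by omega)) hd0
  have hwm := iccWidth_pos (hcd m m.lt_succ_self)
  have hWm : 0 < iccWidth (c m) Z := iccWidth_pos (by omega)
  rw [prod_range_succ, if_neg (lt_irrefl _), prod_congr rfl fun i hi ↦ by
    rw [if_pos (by simp at hi; omega)]]
  change (∏ i ∈ range m, iccWidth (c i) (d (i + 1)) / iccWidth (c i) (d i))
    * (iccWidth (c m) d' / iccWidth (c m) (d m)) < 1 / 2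
  calc _ ≤ iccWidth (c m) (d m) / iccWidth (c m) Z
          * (iccWidth (c m) d' / iccWidth (c m) (d m)) := by
        gcongr
        exact div_nonneg (iccWidth_pos hd').le hwm.le
    _ = iccWidth (c m) d' / iccWidth (c m) Z := by field_simp
    _ < 1 / 2 := by
        rw [div_lt_div_iff₀ hWm two_pos]
        unfold iccWidth
        exact_mod_cast (by omega : (d' - c m + 1) * 2 < 1 * (Z - c m + 1))
end
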